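/- Consistent disparity: let n ≥ 2 and let w_1, …, w_n and w'_1, …, w'_n be two families of positive weights with the same total sum (Σ_i w_i = Σ_i w'_i = s), which agree on all but the first two entries (w_i = w'_i for all 3 ≤ i ≤ n). If |w_1 − w_2| < |w'_1 − w'_2|, then the C-degree of the first family is strictly larger than that of the second: r(w) > r(w'). -/

import Mathlib

/-! The C-degree is `2` raised to `H / log 2`, where `H = ∑ negMulLog (w i / s)` is the natural
entropy, so it suffices to compare entropies. These differ only in the first two terms, and
a strictly concave `f` has `f x' + f y' < f x + f y` whenever `x + y = x' + y'` and `x, y` are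
the closer pair, because `x` and `y` are then mirror-image convex combinations of `x'` and `y'`. -/

/-- The C-degree of a node whose incident edge weights are `w : Fin n → ℝ`:
`2` raised to the Shannon entropy (in bits) of the interaction probability
distribution `p i = w i / s`, where `s = ∑ i, w i` is the node's strength. -/
noncomputable def cdeg {n : ℕ} (w : Fin n → ℝ) : ℝ :=
  (2 : ℝ) ^ (∑ i, (w i / (∑ j, w j)) * Real.logb 2 ((∑ j, w j) / w i))

open Real Set

theorem cdeg_eq_rpow {n : ℕ} (w : Fin n → ℝ) :
    cdeg w = (2 : ℝ) ^ ((∑ i, negMulLog (w i / ∑ j, w j)) / log 2) := by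
  rw [cdeg, Finset.sum_div]
  congr 1
  refine Finset.sum_congr rfl fun i _ => ?_
  rw [logb, ← inv_div (w i), log_inv, negMulLog]
  ring

theorem Fintype.sum_sub_sum_eq_of_eq_off_pair {ι M : Type*} [Fintype ι] [AddCommGroup M]
    {f g : ι → M} {a b : ι} (hab : a ≠ b) (h : ∀ i, i ≠ a → i ≠ b → f i = g i) :
    ∑ i, f i - ∑ i, g i = f a + f b - (g a + g b) := by
  rw [← Finset.sum_sub_distrib,
    Fintype.sum_eq_add a b hab fun i hi => sub_eq_zero.2 (h i hi.1 hi.2)]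
  abel

theorem StrictConcaveOn.add_lt_add_of_mem_Ioo {s : Set ℝ} {f : ℝ → ℝ}
    (hf : StrictConcaveOn ℝ s f) {x y x' y' : ℝ} (hx' : x' ∈ s) (hy' : y' ∈ s)
    (hx : x ∈ Ioo x' y') (hsum : x + y = x' + y') :
    f x' + f y' < f x + f y := by
  obtain ⟨hx'x, hxy'⟩ := hx
  have hd : 0 < y' - x' := by linarith
  set a := (y' - x) / (y' - x')
  set b := (x - x') / (y' - x')
  have ha : 0 < a := div_pos (by linarith) hd
  have hb : 0 < b := div_pos (by linarith) hd
  have hab : a + b = 1 := by simp only [a, b]; field_simp; ring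
  have hx_eq : a * x' + b * y' = x := by simp only [a, b]; field_simp; ring
  have hy_eq : b * x' + a * y' = y := by linear_combination (x' + y') * hab - hx_eq - hsum
  have hfx := hf.2 hx' hy' (hx'x.trans hxy').ne ha hb hab
  have hfy := hf.2 hx' hy' (hx'x.trans hxy').ne hb ha (by linarith)
  simp only [smul_eq_mul, hx_eq, hy_eq] at hfx hfy
  linear_combination hfx + hfy - (f x' + f y') * hab

theorem StrictConcaveOn.add_lt_add_of_abs_sub_lt {s : Set ℝ} {f : ℝ → ℝ}
    (hf : StrictConcaveOn ℝ s f) {x y x' y' : ℝ} (hx' : x' ∈ s) (hy' : y' ∈ s)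
    (hsum : x + y = x' + y') (hlt : |x - y| < |x' - y'|) :
    f x' + f y' < f x + f y := by
  have key : ∀ {x' y'}, x' ∈ s → y' ∈ s → x + y = x' + y' → |x - y| < y' - x' →
      f x' + f y' < f x + f y := fun hx' hy' hsum hlt => by
    obtain ⟨h₁, h₂⟩ := abs_lt.1 hlt
    exact hf.add_lt_add_of_mem_Ioo hx' hy' ⟨by linarith, by linarith⟩ hsum
  rcases le_total x' y' with h | h
  · exact key hx' hy' hsum (by rwa [abs_sub_comm x' y', abs_of_nonneg (sub_nonneg.2 h)] at hlt)
  · rw [add_comm (f x')]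
    exact key hy' hx' (by linarith) (by rwa [abs_of_nonneg (sub_nonneg.2 h)] at hlt)

/-- Consistent disparity: two positive weight families on `n ≥ 2` edges with
the same total strength, agreeing on all but the first two entries; if the
first family's two uncommon weights are closer to each other than the second
family's, its C-degree is strictly larger. -/
theorem cdeg_consistent_disparity {n : ℕ} (hn : 2 ≤ n)
    (w w' : Fin n → ℝ) (hw : ∀ i, 0 < w i) (hw' : ∀ i, 0 < w' i)
    (hsum : ∑ i, w i = ∑ i, w' i)
    (hagree : ∀ i : Fin n, 2 ≤ (i : ℕ) → w i = w' i)
    (hlt : |w ⟨0, by omega⟩ - w ⟨1, by omega⟩| <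
           |w' ⟨0, by omega⟩ - w' ⟨1, by omega⟩|) :
    cdeg w > cdeg w' := by
  set i₀ : Fin n := ⟨0, by omega⟩
  set i₁ : Fin n := ⟨1, by omega⟩
  have hi : i₀ ≠ i₁ := Fin.ne_of_val_ne zero_ne_one
  have hoff : ∀ i, i ≠ i₀ → i ≠ i₁ → w i = w' i := fun i h₀ h₁ =>
    hagree i (by simp only [i₀, i₁, ne_eq, Fin.ext_iff] at h₀ h₁; omega)
  have hpair : w i₀ + w i₁ = w' i₀ + w' i₁ := by
    have := Fintype.sum_sub_sum_eq_of_eq_off_pair hi hoff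
    rw [hsum, sub_self] at this
    linarith
  set s := ∑ i, w i
  have hs : 0 < s := Finset.sum_pos (fun i _ => hw i) ⟨i₀, Finset.mem_univ _⟩
  have hent : ∑ i, negMulLog (w' i / s) < ∑ i, negMulLog (w i / s) := by
    have hdiff := Fintype.sum_sub_sum_eq_of_eq_off_pair (f := fun i => negMulLog (w i / s))
      (g := fun i => negMulLog (w' i / s)) hi fun i h₀ h₁ => by simp only [hoff i h₀ h₁]
    have hpoint := strictConcaveOn_negMulLog.add_lt_add_of_abs_sub_lt
      (x := w i₀ / s) (y := w i₁ / s) (div_pos (hw' i₀) hs).le (div_pos (hw' i₁) hs).le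
      (by rw [← add_div, ← add_div, hpair])
      (by rwa [← sub_div, ← sub_div, abs_div, abs_div, abs_of_pos hs,
        div_lt_div_iff_of_pos_right hs])
    linarith
  rw [gt_iff_lt, cdeg_eq_rpow, cdeg_eq_rpow, ← hsum]
  exact rpow_lt_rpow_of_exponent_lt one_lt_two
    (div_lt_div_of_pos_right hent (log_pos one_lt_two))
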